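/- arXiv:2101.11773 — 4 statements merged into one kernel-verified Lean document; each statement's English description precedes it below -/
import Mathlib

section
/- If an n×n discrete Schrödinger matrix S_n (tridiagonal with diagonal b_1,...,b_n ∈ ℝ and off-diagonal entries 1) has the same characteristic polynomial as the free discrete Schrödinger matrix F_n (same matrix with all b_i = 0), then b_i = 0 for all i, i.e. S_n = F_n. -/
open Polynomial Matrix

section Aux

variable {m : Type*} [Fintype m] [DecidableEq m]

lemma charmatrix_conj (U A V : Matrix m m ℝ) (hUV : U * V = 1) :
    charmatrix (U * A * V) = U.map C * charmatrix A * V.map C := by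
  have hmap : (U * V).map (C : ℝ →+* ℝ[X]) = 1 := by rw [hUV, Matrix.map_one C (map_zero C) (map_one C)]
  rw [charmatrix, charmatrix, mul_sub, sub_mul]
  congr 1
  · rw [← (Matrix.scalar_commute (X : ℝ[X]) (Commute.all X) (U.map C)).eq, mul_assoc,
      ← Matrix.map_mul, hmap, mul_one]
  · simp only [RingHom.mapMatrix_apply]
    rw [← Matrix.map_mul, ← Matrix.map_mul]

lemma charpoly_conj (U A V : Matrix m m ℝ) (hUV : U * V = 1) :
    (U * A * V).charpoly = A.charpoly := by
  have hmap : (U * V).map (C : ℝ →+* ℝ[X]) = 1 := by rw [hUV, Matrix.map_one C (map_zero C) (map_one C)]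
  rw [Matrix.charpoly, charmatrix_conj U A V hUV, det_mul, det_mul, Matrix.charpoly,
    mul_comm (U.map C).det, mul_assoc, ← det_mul, ← Matrix.map_mul, hmap, det_one, mul_one]

lemma charpoly_diagonal (d : m → ℝ) :
    (Matrix.diagonal d).charpoly = ∏ i, (X - C (d i)) := by
  have : charmatrix (Matrix.diagonal d) = Matrix.diagonal fun i => X - C (d i) := by
    ext i j
    by_cases hij : i = j
    · subst hij; simp
    · simp [hij, Matrix.diagonal_apply_ne _ hij]
  rw [Matrix.charpoly, this, det_diagonal]

lemma hermitian_charpoly_eq (A : Matrix m m ℝ) (hA : A.IsHermitian) :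
    A.charpoly = ∏ i, (X - C (hA.eigenvalues i)) := by
  conv_lhs => rw [hA.spectral_theorem, Unitary.conjStarAlgAut_apply]
  rw [charpoly_conj _ _ _ (Matrix.mem_unitaryGroup_iff.mp (hA.eigenvectorUnitary).2)]
  have : (RCLike.ofReal ∘ hA.eigenvalues : m → ℝ) = hA.eigenvalues := by
    ext i; simp
  rw [this, _root_.charpoly_diagonal]

lemma trace_sq_eq (A : Matrix m m ℝ) (hA : A.IsHermitian) :
    (A * A).trace = ∑ i, hA.eigenvalues i ^ 2 := by
  have hU := Matrix.mem_unitaryGroup_iff'.mp (hA.eigenvectorUnitary).2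
  have hd : (RCLike.ofReal ∘ hA.eigenvalues : m → ℝ) = hA.eigenvalues := by ext i; simp
  conv_lhs => rw [hA.spectral_theorem, Unitary.conjStarAlgAut_apply, hd]
  set U : Matrix m m ℝ := (hA.eigenvectorUnitary : Matrix m m ℝ) with hUdef
  set D := Matrix.diagonal hA.eigenvalues with hD
  have h1 : U * D * star U * (U * D * star U) = U * (D * D * star U) := by
    simp only [mul_assoc]
    rw [← mul_assoc (star U), hU, one_mul]
  rw [h1, Matrix.trace_mul_comm, mul_assoc, hU, mul_one,
    hD, Matrix.diagonal_mul_diagonal, Matrix.trace_diagonal]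
  simp [sq]

end Aux

/-- Ambarzumian: if a discrete Schrödinger matrix has the same characteristic polynomial as
the free discrete Schrödinger matrix, then all diagonal entries vanish. -/
theorem ambarzumian_free (n : ℕ) (b : Fin n → ℝ)
    (S F : Matrix (Fin n) (Fin n) ℝ)
    (hS : S = Matrix.of fun i j : Fin n =>
      if i = j then b i
      else if (i : ℕ) + 1 = (j : ℕ) ∨ (j : ℕ) + 1 = (i : ℕ) then 1 else 0)
    (hF : F = Matrix.of fun i j : Fin n =>
      if i = j then (0 : ℝ)
      else if (i : ℕ) + 1 = (j : ℕ) ∨ (j : ℕ) + 1 = (i : ℕ) then 1 else 0)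
    (h : S.charpoly = F.charpoly) :
    (∀ i, b i = 0) ∧ S = F := by
  have hSh : S.IsHermitian := by
    rw [hS]; ext i j
    by_cases hij : i = j
    · subst hij; simp
    · have hji : j ≠ i := fun hh => hij hh.symm
      simp [Matrix.conjTranspose_apply, hij, hji, or_comm]
  have hFh : F.IsHermitian := by
    rw [hF]; ext i j
    by_cases hij : i = j
    · subst hij; simp
    · have hji : j ≠ i := fun hh => hij hh.symm
      simp [Matrix.conjTranspose_apply, hij, hji, or_comm]
  -- eigenvalue multisets coincide
  have hmult : (Finset.univ.val.map hSh.eigenvalues) = (Finset.univ.val.map hFh.eigenvalues) := by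
    have h1 := hermitian_charpoly_eq S hSh
    have h2 := hermitian_charpoly_eq F hFh
    have hroots : S.charpoly.roots = F.charpoly.roots := by rw [h]
    rw [h1, h2] at hroots
    have e1 : (∏ i, (X - C (hSh.eigenvalues i)))
        = ((Finset.univ.val.map hSh.eigenvalues).map fun a => X - C a).prod := by
      rw [Multiset.map_map]; rfl
    have e2 : (∏ i, (X - C (hFh.eigenvalues i)))
        = ((Finset.univ.val.map hFh.eigenvalues).map fun a => X - C a).prod := by
      rw [Multiset.map_map]; rfl
    rw [e1, e2, Polynomial.roots_multiset_prod_X_sub_C, Polynomial.roots_multiset_prod_X_sub_C]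
      at hroots
    exact hroots
  have hsum : ∑ i, hSh.eigenvalues i ^ 2 = ∑ i, hFh.eigenvalues i ^ 2 := by
    have := congrArg (fun s : Multiset ℝ => (s.map fun x => x ^ 2).sum) hmult
    simpa [Multiset.map_map, Finset.sum, Function.comp_def] using this
  have htr : (S * S).trace = (F * F).trace := by
    rw [trace_sq_eq S hSh, trace_sq_eq F hFh, hsum]
  -- compute trace difference
  have hdiff : (S * S).trace - (F * F).trace = ∑ i, b i ^ 2 := by
    rw [Matrix.trace, Matrix.trace, ← Finset.sum_sub_distrib]
    refine Finset.sum_congr rfl fun i _ => ?_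
    simp only [Matrix.diag_apply, Matrix.mul_apply, ← Finset.sum_sub_distrib]
    rw [Finset.sum_eq_single i]
    · simp [hS, hF, sq]
    · intro j _ hji
      simp only [hS, hF, Matrix.of_apply, if_neg (Ne.symm hji), if_neg hji, sub_self]
    · exact fun hh => absurd (Finset.mem_univ i) hh
  rw [htr, sub_self] at hdiff
  have hb : ∀ i, b i = 0 := by
    intro i
    have h0 : ∑ j, b j ^ 2 = 0 := hdiff.symm
    have := (Finset.sum_eq_zero_iff_of_nonneg (fun j _ => sq_nonneg (b j))).mp h0 i
      (Finset.mem_univ i)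
    exact pow_eq_zero_iff (by norm_num) |>.mp this
  refine ⟨hb, ?_⟩
  rw [hS, hF]
  ext i j
  by_cases hij : i = j
  · subst hij; simp [hb]
  · simp [hij]
end

section
/- Let S be an n×n discrete Schrödinger matrix with diagonal entries b, b_2, ..., b_{n-1}, b_n (the first diagonal entry equal to a fixed real b), and let F be the n×n discrete Schrödinger matrix with diagonal entries b, 0, ..., 0. If S and F have the same characteristic polynomial, then b_2 = b_3 = ... = b_n = 0, i.e. S = F. -/
open Polynomial Matrix

lemma charpoly_sq_comp {m : Type*} [Fintype m] [DecidableEq m] {R : Type*} [CommRing R]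
    (M : Matrix m m R) :
    (M ^ 2).charpoly.comp (X ^ 2) =
      M.charpoly * ((-1 : R[X]) ^ Fintype.card m * M.charpoly.comp (-X)) := by
  set φ : R[X] →+* R[X] := eval₂RingHom C (X ^ 2) with hφ
  set ψ : R[X] →+* R[X] := eval₂RingHom C (-X) with hψ
  set s : Matrix m m R[X] := Matrix.scalar m (X : R[X]) with hs
  set N : Matrix m m R[X] := (C : R →+* R[X]).mapMatrix M with hN
  have hc : Commute s N := Matrix.scalar_commute _ (fun r' => Commute.all _ _) _
  have expand : charmatrix M * (s + N) = Matrix.scalar m ((X : R[X]) ^ 2)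
      - (C : R →+* R[X]).mapMatrix (M ^ 2) := by
    have h1 : charmatrix M = s - N := rfl
    have h2 : Matrix.scalar m ((X : R[X]) ^ 2) = s * s := by
      rw [hs, sq, RingHom.map_mul]
    have h3 : (C : R →+* R[X]).mapMatrix (M ^ 2) = N * N := by
      rw [hN, sq, RingHom.map_mul]
    rw [h1, h2, h3, sub_mul, mul_add, mul_add, hc.eq]
    noncomm_ring
  have key1 : (charmatrix (M ^ 2)).map φ = charmatrix M * (s + N) := by
    rw [expand]
    ext i j
    by_cases hij : i = j <;>
      simp [hij, charmatrix_apply, Matrix.diagonal_apply, Matrix.scalar_apply, hφ]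
  have key2 : (charmatrix M).map ψ = -(s + N) := by
    ext i j
    by_cases hij : i = j <;>
      simp [hij, charmatrix_apply, Matrix.diagonal_apply, Matrix.scalar_apply, hψ, hs, hN] <;>
      ring
  have hdet1 : (M ^ 2).charpoly.comp (X ^ 2) = M.charpoly * (s + N).det := by
    have := φ.map_det (charmatrix (M ^ 2))
    rw [RingHom.mapMatrix_apply, key1, det_mul] at this
    exact this
  have hdet2 : M.charpoly.comp (-X) = (-1 : R[X]) ^ Fintype.card m * (s + N).det := by
    have := ψ.map_det (charmatrix M)
    rw [RingHom.mapMatrix_apply, key2, det_neg] at this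
    exact this
  have hone : ((-1 : R[X]) ^ Fintype.card m) * ((-1) ^ Fintype.card m) = 1 := by
    rw [← pow_add, ← two_mul, pow_mul, neg_one_sq, one_pow]
  rw [hdet1, hdet2, ← mul_assoc ((-1 : R[X]) ^ Fintype.card m), hone, one_mul]

/-- Ambarzumian with a known boundary condition `b 0` at the first site: if the discrete
Schrödinger matrix with diagonal `b 0, b 1, …, b n` has the same characteristic polynomial
as the one with diagonal `b 0, 0, …, 0`, then all other diagonal entries vanish. -/
theorem ambarzumian_boundary (n : ℕ) (b : Fin (n + 1) → ℝ)
    (S F : Matrix (Fin (n + 1)) (Fin (n + 1)) ℝ)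
    (hS : S = Matrix.of fun i j : Fin (n + 1) =>
      if i = j then b i
      else if (i : ℕ) + 1 = (j : ℕ) ∨ (j : ℕ) + 1 = (i : ℕ) then 1 else 0)
    (hF : F = Matrix.of fun i j : Fin (n + 1) =>
      if i = j then (if i = 0 then b 0 else 0)
      else if (i : ℕ) + 1 = (j : ℕ) ∨ (j : ℕ) + 1 = (i : ℕ) then 1 else 0)
    (h : S.charpoly = F.charpoly) :
    (∀ i, i ≠ 0 → b i = 0) ∧ S = F := by
  have hsq : (S ^ 2).charpoly = (F ^ 2).charpoly := by
    have hcomp : (S ^ 2).charpoly.comp (X ^ 2) = (F ^ 2).charpoly.comp (X ^ 2) := by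
      rw [charpoly_sq_comp S, charpoly_sq_comp F, h]
    by_contra hne
    have hr : (S ^ 2).charpoly - (F ^ 2).charpoly ≠ 0 := sub_ne_zero.mpr hne
    have h0 : ((S ^ 2).charpoly - (F ^ 2).charpoly).comp ((X : ℝ[X]) ^ 2) = 0 := by
      rw [sub_comp, hcomp, sub_self]
    have hlc := Polynomial.leadingCoeff_comp (p := (S ^ 2).charpoly - (F ^ 2).charpoly)
      (q := (X : ℝ[X]) ^ 2) (by simp)
    rw [h0] at hlc
    simp [leadingCoeff_X_pow] at hlc
    exact hr (leadingCoeff_eq_zero.mp hlc.symm)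
  have htr : Matrix.trace (S ^ 2) = Matrix.trace (F ^ 2) := by
    rw [Matrix.trace_eq_neg_charpoly_coeff, Matrix.trace_eq_neg_charpoly_coeff, hsq]
  have hoff : ∀ i j : Fin (n + 1), i ≠ j → S i j = F i j := by
    intro i j hij
    simp [hS, hF, hij]
  have hSd : ∀ i, S i i = b i := by intro i; simp [hS]
  have hFd : ∀ i, F i i = if i = 0 then b 0 else 0 := by intro i; simp [hF]
  have e1 : Matrix.trace (S ^ 2) = ∑ i, ∑ j, S i j * S j i := by
    simp [sq, Matrix.trace, Matrix.mul_apply, Matrix.diag]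
  have e2 : Matrix.trace (F ^ 2) = ∑ i, ∑ j, F i j * F j i := by
    simp [sq, Matrix.trace, Matrix.mul_apply, Matrix.diag]
  have hsum : ∑ i : Fin (n + 1), ∑ j, (S i j * S j i - F i j * F j i) = 0 := by
    rw [Finset.sum_congr rfl (fun i _ => Finset.sum_sub_distrib _ _),
      Finset.sum_sub_distrib, ← e1, ← e2, htr, sub_self]
  have hterm : ∀ i : Fin (n + 1), ∑ j, (S i j * S j i - F i j * F j i) =
      (if i = 0 then (0 : ℝ) else b i ^ 2) := by
    intro i
    have hinner : ∑ j, (S i j * S j i - F i j * F j i) = S i i * S i i - F i i * F i i := by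
      refine Finset.sum_eq_single i (fun j _ hj => ?_) (by simp)
      rw [hoff i j (Ne.symm hj), hoff j i hj, sub_self]
    rw [hinner, hSd, hFd]
    by_cases hi : i = 0
    · simp [hi]
    · rw [if_neg hi, if_neg hi]
      ring
  have hzero : ∑ i : Fin (n + 1), (if i = 0 then (0 : ℝ) else b i ^ 2) = 0 := by
    calc ∑ i : Fin (n + 1), (if i = 0 then (0 : ℝ) else b i ^ 2)
        = ∑ i : Fin (n + 1), ∑ j, (S i j * S j i - F i j * F j i) :=
          Finset.sum_congr rfl fun i _ => (hterm i).symm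
      _ = 0 := hsum
  have hb : ∀ i, i ≠ 0 → b i = 0 := by
    intro i hi
    have hnn : ∀ j ∈ Finset.univ, (0:ℝ) ≤ (if j = 0 then (0 : ℝ) else b j ^ 2) := by
      intro j _; by_cases hj : j = 0 <;> simp [hj, sq_nonneg]
    have := (Finset.sum_eq_zero_iff_of_nonneg hnn).mp hzero i (Finset.mem_univ i)
    rw [if_neg hi] at this
    exact (pow_eq_zero_iff two_ne_zero).mp this
  refine ⟨hb, ?_⟩
  rw [hS, hF]
  ext i j
  by_cases hij : i = j
  · subst hij
    simp only [Matrix.of_apply, if_pos rfl]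
    by_cases hi : i = 0
    · rw [if_pos hi, hi]
    · rw [if_neg hi, hb i hi]
  · simp [hij]
end

section
/- Let S_n(θ) be the n×n Floquet discrete Schrödinger matrix with diagonal b_1,...,b_n ∈ ℝ and corner entries e^{2πiθ}, e^{-2πiθ}, and let F_n(φ) be the same matrix with zero diagonal and corner entries e^{2πiφ}, e^{-2πiφ}, where θ, φ ∈ [0,1). If S_n(θ) and F_n(φ) have the same characteristic polynomial, then b_1 = ... = b_n = 0 and either θ = φ or θ = 1 - φ; in particular S_n(θ) = F_n(φ) or S_n(θ) equals the transpose of F_n(φ). -/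
open Polynomial Matrix

/-- The `n × n` Floquet discrete Schrödinger matrix with diagonal `b` and
corner entries `e^{2πiθ}`, `e^{-2πiθ}`. -/
noncomputable def floquetS (n : ℕ) (b : Fin n → ℝ) (θ : ℝ) :
    Matrix (Fin n) (Fin n) ℂ :=
  Matrix.of fun i j =>
    if i = j then (b i : ℂ)
    else if (i : ℕ) + 1 = (j : ℕ) ∨ (j : ℕ) + 1 = (i : ℕ) then 1
    else if (i : ℕ) = 0 ∧ (j : ℕ) = n - 1 then
      Complex.exp (((2 * Real.pi * θ : ℝ) : ℂ) * Complex.I)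
    else if (i : ℕ) = n - 1 ∧ (j : ℕ) = 0 then
      Complex.exp (-(((2 * Real.pi * θ : ℝ) : ℂ) * Complex.I))
    else 0

/-! ### Auxiliary lemmas -/

lemma amb_charmatrix_eq {R : Type*} [CommRing R] {n : ℕ} (M : Matrix (Fin n) (Fin n) R) :
    charmatrix M = (Polynomial.X : R[X]) • (1 : Matrix (Fin n) (Fin n) R[X]) - M.map C := by
  ext i j
  by_cases h : i = j <;>
    simp [charmatrix_apply, Matrix.one_apply, h, Matrix.diagonal_apply]

lemma amb_charpoly_conj {R : Type*} [CommRing R] {n : ℕ} (U V M : Matrix (Fin n) (Fin n) R)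
    (h1 : U * V = 1) : (U * M * V).charpoly = M.charpoly := by
  have h2 : V * U = 1 := mul_eq_one_comm.mp h1
  have hm : ∀ (A B : Matrix (Fin n) (Fin n) R),
      (A * B).map (C : R →+* R[X]) = A.map C * B.map C := by
    intro A B; exact Matrix.map_mul
  have key : charmatrix (U * M * V) = U.map C * charmatrix M * V.map C := by
    rw [amb_charmatrix_eq, amb_charmatrix_eq]
    rw [mul_sub, sub_mul]
    congr 1
    · rw [Matrix.mul_smul, Matrix.smul_mul, mul_one, ← hm, h1]
      simp
    · rw [← hm, ← hm]
  unfold Matrix.charpoly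
  rw [key, det_mul, det_mul, mul_comm, ← mul_assoc, ← det_mul, ← hm, h2]
  simp

lemma amb_charpoly_diagonal {R : Type*} [CommRing R] {n : ℕ} (d : Fin n → R) :
    (Matrix.diagonal d).charpoly = ∏ i, (X - C (d i)) := by
  unfold Matrix.charpoly
  have : charmatrix (Matrix.diagonal d) = Matrix.diagonal (fun i => (X : R[X]) - C (d i)) := by
    ext i j
    by_cases h : i = j
    · subst h; simp [charmatrix_apply, Matrix.diagonal_apply]
    · simp [charmatrix_apply_ne _ _ _ h, Matrix.diagonal_apply_ne _ h]
  rw [this, det_diagonal]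

lemma amb_herm_charpoly {n : ℕ} {A : Matrix (Fin n) (Fin n) ℂ} (hA : A.IsHermitian) :
    A.charpoly = ∏ i, (X - C ((hA.eigenvalues i : ℂ))) := by
  have hs := hA.spectral_theorem
  set U : Matrix (Fin n) (Fin n) ℂ := (hA.eigenvectorUnitary : Matrix (Fin n) (Fin n) ℂ)
  have h1 : U * star U = 1 := (Matrix.mem_unitaryGroup_iff).mp hA.eigenvectorUnitary.2
  calc A.charpoly
      = (U * Matrix.diagonal (RCLike.ofReal ∘ hA.eigenvalues) * star U).charpoly := by
        exact congrArg Matrix.charpoly hs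
    _ = (Matrix.diagonal (RCLike.ofReal ∘ hA.eigenvalues)).charpoly :=
        amb_charpoly_conj _ _ _ h1
    _ = ∏ i, (X - C ((hA.eigenvalues i : ℂ))) := by
        rw [amb_charpoly_diagonal]; rfl

lemma amb_herm_trace_sq {n : ℕ} {A : Matrix (Fin n) (Fin n) ℂ} (hA : A.IsHermitian) :
    Matrix.trace (A * A) = ∑ i, ((hA.eigenvalues i : ℂ))^2 := by
  have hs := hA.spectral_theorem
  set U : Matrix (Fin n) (Fin n) ℂ := (hA.eigenvectorUnitary : Matrix (Fin n) (Fin n) ℂ)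
  have h2 : star U * U = 1 := (Matrix.mem_unitaryGroup_iff').mp hA.eigenvectorUnitary.2
  set D := Matrix.diagonal (RCLike.ofReal ∘ hA.eigenvalues : Fin n → ℂ) with hD
  have : A * A = U * (D * D) * star U := by
    rw [hs]
    calc U * D * star U * (U * D * star U)
        = U * (D * ((star U * U) * D)) * star U := by
          simp only [Matrix.mul_assoc]
    _ = U * (D * D) * star U := by rw [h2, Matrix.one_mul, Matrix.mul_assoc]
  rw [this, Matrix.trace_mul_cycle, ← Matrix.mul_assoc, h2, Matrix.one_mul]
  rw [show D * D = Matrix.diagonal (fun i => ((hA.eigenvalues i : ℂ))^2) from by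
    rw [hD, Matrix.diagonal_mul_diagonal]; funext; simp [sq]]
  rw [Matrix.trace_diagonal]

lemma amb_sum_sq_eq_of_prod_eq {n : ℕ} (f g : Fin n → ℂ)
    (h : ∏ i, (X - C (f i)) = ∏ i, (X - C (g i))) :
    ∑ i, (f i)^2 = ∑ i, (g i)^2 := by
  have hf : ∏ i, (X - C (f i)) = ((Finset.univ.val.map f).map fun a => X - C a).prod := by
    rw [Multiset.map_map]; rfl
  have hg : ∏ i, (X - C (g i)) = ((Finset.univ.val.map g).map fun a => X - C a).prod := by
    rw [Multiset.map_map]; rfl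
  have hroots : (Finset.univ.val.map f) = (Finset.univ.val.map g) := by
    have := congrArg Polynomial.roots h
    rwa [hf, hg, Polynomial.roots_multiset_prod_X_sub_C,
      Polynomial.roots_multiset_prod_X_sub_C] at this
  calc ∑ i, (f i)^2 = ((Finset.univ.val.map f).map fun x => x^2).sum := by
        rw [Multiset.map_map]; rfl
    _ = ((Finset.univ.val.map g).map fun x => x^2).sum := by rw [hroots]
    _ = ∑ i, (g i)^2 := by rw [Multiset.map_map]; rfl

lemma amb_isHermitian_floquetS (n : ℕ) (b : Fin n → ℝ) (θ : ℝ) :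
    (floquetS n b θ).IsHermitian := by
  rw [Matrix.IsHermitian]
  ext i j
  rw [Matrix.conjTranspose_apply]
  unfold floquetS
  simp only [Matrix.of_apply]
  by_cases h1 : i = j
  · subst h1; simp [Complex.conj_ofReal]
  · have h1' : ¬ j = i := fun h => h1 h.symm
    rw [if_neg h1', if_neg h1]
    by_cases h2 : (i : ℕ) + 1 = (j : ℕ) ∨ (j : ℕ) + 1 = (i : ℕ)
    · rw [if_pos h2, if_pos (Or.symm h2)]; simp
    · rw [if_neg h2, if_neg (fun h => h2 (Or.symm h))]
      by_cases h3 : (i : ℕ) = 0 ∧ (j : ℕ) = n - 1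
      · have h3' : ¬ ((j:ℕ) = 0 ∧ (i:ℕ) = n - 1) := by
          rintro ⟨hj0, hin⟩
          exact h1 (Fin.ext (by omega))
        rw [if_neg h3', if_pos ⟨h3.2, h3.1⟩, if_pos h3, Complex.star_def,
          ← Complex.exp_conj]
        simp [Complex.conj_ofReal, map_ofNat]
      · rw [if_neg h3]
        by_cases h4 : (i : ℕ) = n - 1 ∧ (j : ℕ) = 0
        · rw [if_pos ⟨h4.2, h4.1⟩, if_pos h4, Complex.star_def, ← Complex.exp_conj]
          simp [Complex.conj_ofReal, map_ofNat]
        · have h3' : ¬ ((j:ℕ) = 0 ∧ (i:ℕ) = n - 1) := fun ⟨a, c⟩ => h4 ⟨c, a⟩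
          have h4' : ¬ ((j:ℕ) = n - 1 ∧ (i:ℕ) = 0) := fun ⟨a, c⟩ => h3 ⟨c, a⟩
          rw [if_neg h3', if_neg h4', if_neg h4]
          simp

lemma amb_floquetS_prod_entry (n : ℕ) (hn : 3 ≤ n) (b : Fin n → ℝ) (θ : ℝ) (i j : Fin n) :
    (floquetS n b θ) i j * (floquetS n b θ) j i
      = if i = j then ((b i : ℂ))^2
        else if ((i:ℕ) + 1 = (j:ℕ) ∨ (j:ℕ) + 1 = (i:ℕ))
            ∨ ((i:ℕ) = 0 ∧ (j:ℕ) = n - 1) ∨ ((i:ℕ) = n - 1 ∧ (j:ℕ) = 0) then 1 else 0 := by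
  by_cases hij : i = j
  · subst hij
    simp [floquetS, sq]
  · have hij' : (i : ℕ) ≠ (j : ℕ) := fun h => hij (Fin.ext h)
    unfold floquetS
    simp only [Matrix.of_apply, if_neg hij, if_neg (Ne.symm hij),
      if_neg (fun h => hij (Fin.ext h)), if_neg (fun h : j = i => hij (h.symm))]
    split_ifs <;>
      first
        | rfl
        | (exfalso; omega)
        | (norm_num; done)
        | (rw [← Complex.exp_add]; simp)

lemma amb_floquetS_trace_sq_diff (n : ℕ) (hn : 3 ≤ n) (b : Fin n → ℝ) (θ φ : ℝ) :
    Matrix.trace (floquetS n b θ * floquetS n b θ)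
      - Matrix.trace (floquetS n (fun _ => 0) φ * floquetS n (fun _ => 0) φ)
      = ∑ i, ((b i : ℂ))^2 := by
  set S := floquetS n b θ
  set F := floquetS n (fun _ => 0) φ
  have key : ∀ i j : Fin n, S i j * S j i - F i j * F j i
      = if i = j then ((b i : ℂ))^2 else 0 := by
    intro i j
    rw [amb_floquetS_prod_entry n hn b θ i j, amb_floquetS_prod_entry n hn (fun _ => 0) φ i j]
    by_cases hij : i = j <;> simp [hij]
  have h1 : Matrix.trace (S * S) = ∑ i, ∑ j, S i j * S j i := by
    simp [Matrix.trace, Matrix.diag, Matrix.mul_apply]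
  have h2 : Matrix.trace (F * F) = ∑ i, ∑ j, F i j * F j i := by
    simp [Matrix.trace, Matrix.diag, Matrix.mul_apply]
  rw [h1, h2, ← Finset.sum_sub_distrib]
  have : ∀ i : Fin n, (∑ j, S i j * S j i) - (∑ j, F i j * F j i) = ((b i : ℂ))^2 := by
    intro i
    rw [← Finset.sum_sub_distrib]
    simp only [key]
    simp
  simp only [this]

/-! ### Determinant machinery -/

noncomputable def ambPathM (m : ℕ) : Matrix (Fin (m+1)) (Fin (m+1)) ℂ :=
  Matrix.of fun i j => if (i : ℕ) + 1 = (j : ℕ) ∨ (j : ℕ) + 1 = (i : ℕ) then 1 else 0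

noncomputable def ambE (k : ℕ) (t : Fin (k)) : Fin k → ℂ := fun j => if j = t then 1 else 0

lemma amb_updateRow_comm {α : Type*} {k : ℕ} (M : Matrix (Fin k) (Fin k) α)
    {i i' : Fin k} (h : i ≠ i') (r r' : Fin k → α) :
    (M.updateRow i r).updateRow i' r' = (M.updateRow i' r').updateRow i r := by
  ext a c
  by_cases h1 : a = i' <;> by_cases h2 : a = i <;>
    simp_all [Matrix.updateRow_apply]

lemma amb_detB (hm : 2 ≤ m) :
    ((ambPathM m).updateRow 0 (ambE (m+1) (Fin.last m))
      |>.updateRow (Fin.last m) (ambE (m+1) ⟨m-1, by omega⟩)).det = (-1)^m := by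
  set Mb := ((ambPathM m).updateRow 0 (ambE (m+1) (Fin.last m))
      |>.updateRow (Fin.last m) (ambE (m+1) ⟨m-1, by omega⟩)) with hMb
  have h0last : (0 : Fin (m+1)) ≠ Fin.last m := by
    simp [Fin.ext_iff, Fin.last]; omega
  have hrow0 : ∀ j, Mb 0 j = ambE (m+1) (Fin.last m) j := by
    intro j
    rw [hMb, Matrix.updateRow_ne h0last, Matrix.updateRow_self]
  rw [Matrix.det_succ_row_zero]
  rw [Finset.sum_eq_single (Fin.last m)]
  · rw [hrow0]
    have : ambE (m+1) (Fin.last m) (Fin.last m) = 1 := by simp [ambE]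
    rw [this, mul_one]
    have hsub : ((Mb.submatrix Fin.succ (Fin.last m).succAbove)).det = 1 := by
      have hub : (Mb.submatrix Fin.succ (Fin.last m).succAbove).BlockTriangular id := by
        intro r c hrc
        simp only [id] at hrc
        simp only [Matrix.submatrix_apply, Fin.succAbove_last]
        by_cases hr : r.succ = Fin.last m
        · rw [hMb, hr, Matrix.updateRow_self]
          have : (c.castSucc : Fin (m+1)) ≠ ⟨m-1, by omega⟩ := by
            have hr' : (r : ℕ) + 1 = m := by
              have := congrArg Fin.val hr; simpa using this
            simp [Fin.ext_iff]
            omega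
          simp [ambE, this]
        · rw [hMb, Matrix.updateRow_ne hr, Matrix.updateRow_ne (Fin.succ_ne_zero r)]
          have : ¬ (((r.succ : Fin (m+1)) : ℕ) + 1 = (c.castSucc : ℕ)
              ∨ ((c.castSucc : ℕ)) + 1 = ((r.succ : Fin (m+1)) : ℕ)) := by
            have hr' : (r : ℕ) + 1 ≠ m := fun hh => hr (by simp [Fin.ext_iff, Fin.last]; omega)
            simp only [Fin.val_succ, Fin.coe_castSucc]
            omega
          simp only [ambPathM, Matrix.of_apply, if_neg this]
      rw [Matrix.det_of_upperTriangular hub]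
      apply Finset.prod_eq_one
      intro r _
      simp only [Matrix.submatrix_apply, Fin.succAbove_last]
      by_cases hr : r.succ = Fin.last m
      · rw [hMb, hr, Matrix.updateRow_self]
        have hr' : (r : ℕ) + 1 = m := by
          have := congrArg Fin.val hr; simpa using this
        have : (r.castSucc : Fin (m+1)) = ⟨m-1, by omega⟩ := by
          simp [Fin.ext_iff]; omega
        simp [ambE, this]
      · rw [hMb, Matrix.updateRow_ne hr, Matrix.updateRow_ne (Fin.succ_ne_zero r)]
        have : ((r.succ : Fin (m+1)) : ℕ) + 1 = ((r.castSucc : Fin (m+1)) : ℕ)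
            ∨ ((r.castSucc : Fin (m+1)) : ℕ) + 1 = ((r.succ : Fin (m+1)) : ℕ) := by
          right; simp
        simp [ambPathM, this]
    rw [hsub, mul_one]
    simp [Fin.last]
  · intro j _ hj
    rw [hrow0]
    have : ambE (m+1) (Fin.last m) j = 0 := by simp [ambE, hj]
    rw [this]; ring
  · intro hh; exact absurd (Finset.mem_univ _) hh

lemma amb_detC (hm : 2 ≤ m) :
    ((ambPathM m).updateRow 0 (ambE (m+1) ⟨1, by omega⟩)
      |>.updateRow (Fin.last m) (ambE (m+1) 0)).det = (-1)^m := by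
  set Mc := ((ambPathM m).updateRow 0 (ambE (m+1) ⟨1, by omega⟩)
      |>.updateRow (Fin.last m) (ambE (m+1) 0)) with hMc
  have hcast_ne_last : ∀ r : Fin m, (r.castSucc : Fin (m+1)) ≠ Fin.last m := by
    intro r; simp [Fin.ext_iff, Fin.last]; omega
  have hrowlast : ∀ j, Mc (Fin.last m) j = ambE (m+1) 0 j := by
    intro j; rw [hMc, Matrix.updateRow_self]
  rw [Matrix.det_succ_row Mc (Fin.last m)]
  rw [Finset.sum_eq_single (0 : Fin (m+1))]
  · rw [hrowlast]
    have : ambE (m+1) 0 0 = 1 := by simp [ambE]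
    rw [this, mul_one]
    have key : ∀ (r c : Fin m),
        (Mc.submatrix (Fin.last m).succAbove (0 : Fin (m+1)).succAbove) r c
          = Mc r.castSucc c.succ := by
      intro r c
      rw [Matrix.submatrix_apply, Fin.succAbove_last, Fin.succAbove_zero]
    have hsub : ((Mc.submatrix (Fin.last m).succAbove (0 : Fin (m+1)).succAbove)).det = 1 := by
      have hlb : (Mc.submatrix (Fin.last m).succAbove (0 : Fin (m+1)).succAbove).BlockTriangular
          OrderDual.toDual := by
        intro r c hrc
        have hrc' : (r : ℕ) < (c : ℕ) := hrc
        rw [key]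
        rw [hMc, Matrix.updateRow_ne (hcast_ne_last r)]
        by_cases hr : (r.castSucc : Fin (m+1)) = 0
        · rw [hr, Matrix.updateRow_self]
          have : (c.succ : Fin (m+1)) ≠ ⟨1, by omega⟩ := by
            have : (r : ℕ) = 0 := by simpa [Fin.ext_iff] using hr
            simp [Fin.ext_iff]; omega
          simp [ambE, this]
        · rw [Matrix.updateRow_ne hr]
          have : ¬ (((r.castSucc : Fin (m+1)) : ℕ) + 1 = ((c.succ : Fin (m+1)) : ℕ)
              ∨ ((c.succ : Fin (m+1)) : ℕ) + 1 = ((r.castSucc : Fin (m+1)) : ℕ)) := by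
            simp only [Fin.coe_castSucc, Fin.val_succ]
            omega
          simp only [ambPathM, Matrix.of_apply, if_neg this]
      rw [Matrix.det_of_lowerTriangular _ hlb]
      apply Finset.prod_eq_one
      intro r _
      rw [key, hMc, Matrix.updateRow_ne (hcast_ne_last r)]
      by_cases hr : (r.castSucc : Fin (m+1)) = 0
      · rw [hr, Matrix.updateRow_self]
        have hr0 : (r : ℕ) = 0 := by simpa [Fin.ext_iff] using hr
        have : (r.succ : Fin (m+1)) = ⟨1, by omega⟩ := by simp [Fin.ext_iff]; omega
        simp [ambE, this]
      · rw [Matrix.updateRow_ne hr]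
        have : ((r.castSucc : Fin (m+1)) : ℕ) + 1 = ((r.succ : Fin (m+1)) : ℕ)
            ∨ ((r.succ : Fin (m+1)) : ℕ) + 1 = ((r.castSucc : Fin (m+1)) : ℕ) := by
          left; simp
        simp [ambPathM, this]
    rw [hsub, mul_one]
    simp [Fin.last]
  · intro j _ hj
    rw [hrowlast]
    have : ambE (m+1) 0 j = 0 := by simp [ambE, hj]
    rw [this]; ring
  · intro hh; exact absurd (Finset.mem_univ _) hh

lemma amb_floquetS_eq_update {m : ℕ} (hm : 2 ≤ m) (θ : ℝ) :
    floquetS (m+1) (fun _ => 0) θ =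
      Matrix.updateRow
        ((ambPathM m).updateRow 0
          (ambE (m+1) ⟨1, by omega⟩
            + Complex.exp (((2 * Real.pi * θ : ℝ) : ℂ) * Complex.I) • ambE (m+1) (Fin.last m)))
        (Fin.last m)
        (ambE (m+1) ⟨m-1, by omega⟩
          + Complex.exp (-(((2 * Real.pi * θ : ℝ) : ℂ) * Complex.I)) • ambE (m+1) 0) := by
  ext i j
  rw [Matrix.updateRow_apply, Matrix.updateRow_apply]
  by_cases hi : i = Fin.last m
  · rw [if_pos hi]
    subst hi
    simp only [floquetS, Matrix.of_apply, Pi.add_apply, Pi.smul_apply, smul_eq_mul, ambE]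
    split_ifs <;>
      first
        | (norm_num; done)
        | (exfalso; simp only [Fin.ext_iff, Fin.val_last, Fin.val_zero, Fin.val_mk, Nat.add_sub_cancel, true_and, and_true, false_and, and_false] at *; omega)
        | (simp only [Fin.ext_iff, Fin.val_last, Fin.val_zero, Fin.val_mk, Nat.add_sub_cancel, true_and, and_true, false_and, and_false] at *; omega)
  · rw [if_neg hi]
    by_cases hi0 : i = 0
    · rw [if_pos hi0]
      subst hi0
      simp only [floquetS, Matrix.of_apply, Pi.add_apply, Pi.smul_apply, smul_eq_mul, ambE]
      split_ifs <;>
        first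
          | (norm_num; done)
          | (exfalso; simp only [Fin.ext_iff, Fin.val_last, Fin.val_zero, Fin.val_mk, Nat.add_sub_cancel, true_and, and_true, false_and, and_false] at *; omega)
          | (simp only [Fin.ext_iff, Fin.val_last, Fin.val_zero, Fin.val_mk, Nat.add_sub_cancel, true_and, and_true, false_and, and_false] at *; omega)
    · rw [if_neg hi0]
      have hi' : (i : ℕ) ≠ m := fun h => hi (Fin.ext h)
      have hi0' : (i : ℕ) ≠ 0 := fun h => hi0 (Fin.ext h)
      simp only [floquetS, ambPathM, Matrix.of_apply]
      split_ifs <;>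
        first
          | rfl
          | (norm_num; done)
          | (exfalso; simp only [Fin.ext_iff, Fin.val_last, Fin.val_zero, Fin.val_mk, Nat.add_sub_cancel, true_and, and_true, false_and, and_false] at *; omega)
          | (simp only [Fin.ext_iff, Fin.val_last, Fin.val_zero, Fin.val_mk, Nat.add_sub_cancel, true_and, and_true, false_and, and_false] at *; omega)

lemma amb_det_update_expand {m : ℕ} (hm : 2 ≤ m) (x y : ℂ) :
    (Matrix.updateRow
        ((ambPathM m).updateRow 0 (ambE (m+1) ⟨1, by omega⟩ + x • ambE (m+1) (Fin.last m)))
        (Fin.last m)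
        (ambE (m+1) ⟨m-1, by omega⟩ + y • ambE (m+1) 0)).det
    = (Matrix.updateRow ((ambPathM m).updateRow 0 (ambE (m+1) ⟨1, by omega⟩)) (Fin.last m)
        (ambE (m+1) ⟨m-1, by omega⟩)).det
      + y * (Matrix.updateRow ((ambPathM m).updateRow 0 (ambE (m+1) ⟨1, by omega⟩)) (Fin.last m)
        (ambE (m+1) 0)).det
      + x * (Matrix.updateRow ((ambPathM m).updateRow 0 (ambE (m+1) (Fin.last m))) (Fin.last m)
        (ambE (m+1) ⟨m-1, by omega⟩)).det
      + x * y * (Matrix.updateRow ((ambPathM m).updateRow 0 (ambE (m+1) (Fin.last m))) (Fin.last m)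
        (ambE (m+1) 0)).det := by
  have h0last : (0 : Fin (m+1)) ≠ Fin.last m := by
    simp [Fin.ext_iff, Fin.last]; omega
  have swap : ∀ (u v : Fin (m+1) → ℂ),
      ((ambPathM m).updateRow 0 u).updateRow (Fin.last m) v
        = ((ambPathM m).updateRow (Fin.last m) v).updateRow 0 u := fun u v =>
    amb_updateRow_comm (ambPathM m) h0last u v
  have split0 : ∀ (v : Fin (m+1) → ℂ),
      (((ambPathM m).updateRow 0 (ambE (m+1) ⟨1, by omega⟩ + x • ambE (m+1) (Fin.last m))).updateRow
        (Fin.last m) v).det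
      = (((ambPathM m).updateRow 0 (ambE (m+1) ⟨1, by omega⟩)).updateRow (Fin.last m) v).det
        + x * (((ambPathM m).updateRow 0 (ambE (m+1) (Fin.last m))).updateRow (Fin.last m) v).det := by
    intro v
    rw [swap, Matrix.det_updateRow_add, Matrix.det_updateRow_smul, ← swap, ← swap]
  rw [Matrix.det_updateRow_add, Matrix.det_updateRow_smul, split0, split0]
  ring

lemma amb_det_floquet {m : ℕ} (hm : 2 ≤ m) (θ : ℝ) :
    (floquetS (m+1) (fun _ => 0) θ).det
      = (Matrix.updateRow ((ambPathM m).updateRow 0 (ambE (m+1) ⟨1, by omega⟩)) (Fin.last m)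
          (ambE (m+1) ⟨m-1, by omega⟩)).det
        + (Matrix.updateRow ((ambPathM m).updateRow 0 (ambE (m+1) (Fin.last m))) (Fin.last m)
          (ambE (m+1) 0)).det
        + (Complex.exp (((2 * Real.pi * θ : ℝ) : ℂ) * Complex.I)
            + Complex.exp (-(((2 * Real.pi * θ : ℝ) : ℂ) * Complex.I))) * (-1)^m := by
  rw [amb_floquetS_eq_update hm θ, amb_det_update_expand hm, amb_detB hm, amb_detC hm]
  have hxy : Complex.exp (((2 * Real.pi * θ : ℝ) : ℂ) * Complex.I)
      * Complex.exp (-(((2 * Real.pi * θ : ℝ) : ℂ) * Complex.I)) = 1 := by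
    rw [← Complex.exp_add]; simp
  linear_combination (Matrix.updateRow ((ambPathM m).updateRow 0 (ambE (m+1) (Fin.last m)))
    (Fin.last m) (ambE (m+1) 0)).det * hxy

lemma amb_cos_eq_of_det_eq {m : ℕ} (hm : 2 ≤ m) {θ φ : ℝ}
    (h : (floquetS (m+1) (fun _ => 0) θ).det = (floquetS (m+1) (fun _ => 0) φ).det) :
    Real.cos (2 * Real.pi * θ) = Real.cos (2 * Real.pi * φ) := by
  rw [amb_det_floquet hm θ, amb_det_floquet hm φ] at h
  have h2 : (Complex.exp (((2 * Real.pi * θ : ℝ) : ℂ) * Complex.I)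
        + Complex.exp (-(((2 * Real.pi * θ : ℝ) : ℂ) * Complex.I))) * (-1 : ℂ)^m
      = (Complex.exp (((2 * Real.pi * φ : ℝ) : ℂ) * Complex.I)
        + Complex.exp (-(((2 * Real.pi * φ : ℝ) : ℂ) * Complex.I))) * (-1)^m := by
    linear_combination h
  have h3 := mul_right_cancel₀ (pow_ne_zero m (neg_ne_zero.mpr one_ne_zero)) h2
  have hθc : Complex.exp (((2 * Real.pi * θ : ℝ) : ℂ) * Complex.I)
      + Complex.exp (-(((2 * Real.pi * θ : ℝ) : ℂ) * Complex.I))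
      = 2 * Complex.cos (((2 * Real.pi * θ : ℝ) : ℂ)) := by
    rw [Complex.two_cos]; ring_nf
  have hφc : Complex.exp (((2 * Real.pi * φ : ℝ) : ℂ) * Complex.I)
      + Complex.exp (-(((2 * Real.pi * φ : ℝ) : ℂ) * Complex.I))
      = 2 * Complex.cos (((2 * Real.pi * φ : ℝ) : ℂ)) := by
    rw [Complex.two_cos]; ring_nf
  rw [hθc, hφc] at h3
  have h4 : Complex.cos (((2 * Real.pi * θ : ℝ) : ℂ)) = Complex.cos (((2 * Real.pi * φ : ℝ) : ℂ)) :=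
    mul_left_cancel₀ two_ne_zero h3
  rw [← Complex.ofReal_cos, ← Complex.ofReal_cos] at h4
  exact_mod_cast h4

lemma amb_angle {θ φ : ℝ} (hθ : θ ∈ Set.Ico (0 : ℝ) 1) (hφ : φ ∈ Set.Ico (0 : ℝ) 1)
    (h : Real.cos (2 * Real.pi * θ) = Real.cos (2 * Real.pi * φ)) :
    θ = φ ∨ θ = 1 - φ := by
  obtain ⟨hθ0, hθ1⟩ := hθ
  obtain ⟨hφ0, hφ1⟩ := hφ
  have hπ := Real.pi_pos
  obtain ⟨k, hk | hk⟩ := Real.cos_eq_cos_iff.mp h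
  · -- 2πφ = 2kπ + 2πθ
    have : 2 * Real.pi * (φ - θ - k) = 0 := by linarith [hk]
    have h5 : φ - θ - k = 0 := by
      rcases mul_eq_zero.mp this with h' | h'
      · nlinarith
      · exact h'
    have hkb : (-1 : ℝ) < k ∧ (k : ℝ) < 1 := by constructor <;> nlinarith
    have : k = 0 := by
      have h1 : (-1 : ℤ) < k := by exact_mod_cast hkb.1
      have h2 : (k : ℤ) < 1 := by exact_mod_cast hkb.2
      omega
    left; rw [this] at h5; push_cast at h5; linarith
  · -- 2πφ = 2kπ - 2πθ
    have : 2 * Real.pi * (φ + θ - k) = 0 := by linarith [hk]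
    have h5 : φ + θ - k = 0 := by
      rcases mul_eq_zero.mp this with h' | h'
      · nlinarith
      · exact h'
    have hkb : (-1 : ℝ) < k ∧ (k : ℝ) < 2 := by constructor <;> nlinarith
    have hk02 : k = 0 ∨ k = 1 := by
      have h1 : (-1 : ℤ) < k := by exact_mod_cast hkb.1
      have h2 : (k : ℤ) < 2 := by exact_mod_cast hkb.2
      omega
    rcases hk02 with rfl | rfl
    · left; push_cast at h5; linarith
    · right; push_cast at h5; linarith

lemma amb_floquetS_one_sub (n : ℕ) (hn : 3 ≤ n) (φ : ℝ) :
    floquetS n (fun _ => 0) (1 - φ) = (floquetS n (fun _ => 0) φ)ᵀ := by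
  have key1 : Complex.exp (((2 * Real.pi * (1 - φ) : ℝ) : ℂ) * Complex.I)
      = Complex.exp (-(((2 * Real.pi * φ : ℝ) : ℂ) * Complex.I)) := by
    have : (((2 * Real.pi * (1 - φ) : ℝ) : ℂ) * Complex.I)
        = 2 * Real.pi * Complex.I + (-(((2 * Real.pi * φ : ℝ) : ℂ) * Complex.I)) := by
      push_cast; ring
    rw [this, Complex.exp_add, Complex.exp_two_pi_mul_I, one_mul]
  have key2 : Complex.exp (-(((2 * Real.pi * (1 - φ) : ℝ) : ℂ) * Complex.I))
      = Complex.exp (((2 * Real.pi * φ : ℝ) : ℂ) * Complex.I) := by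
    have : (-(((2 * Real.pi * (1 - φ) : ℝ) : ℂ) * Complex.I))
        = -(2 * Real.pi * Complex.I) + (((2 * Real.pi * φ : ℝ) : ℂ) * Complex.I) := by
      push_cast; ring
    rw [this, Complex.exp_add, Complex.exp_neg, Complex.exp_two_pi_mul_I, inv_one, one_mul]
  ext i j
  rw [Matrix.transpose_apply]
  unfold floquetS
  simp only [Matrix.of_apply]
  by_cases h1 : i = j
  · subst h1; simp
  · have h1' : ¬ j = i := fun h => h1 h.symm
    rw [if_neg h1', if_neg h1]
    by_cases h2 : (i : ℕ) + 1 = (j : ℕ) ∨ (j : ℕ) + 1 = (i : ℕ)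
    · rw [if_pos h2, if_pos (Or.symm h2)]
    · rw [if_neg h2, if_neg (fun h => h2 (Or.symm h))]
      by_cases h3 : (i : ℕ) = 0 ∧ (j : ℕ) = n - 1
      · have h3' : ¬ ((j:ℕ) = 0 ∧ (i:ℕ) = n - 1) := by
          rintro ⟨hj0, hin⟩; exact h1 (Fin.ext (by omega))
        rw [if_pos h3, if_neg h3', if_pos ⟨h3.2, h3.1⟩]
        exact key1
      · rw [if_neg h3]
        by_cases h4 : (i : ℕ) = n - 1 ∧ (j : ℕ) = 0
        · rw [if_pos h4, if_pos ⟨h4.2, h4.1⟩]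
          exact key2
        · have h3' : ¬ ((j:ℕ) = 0 ∧ (i:ℕ) = n - 1) := fun ⟨a, c⟩ => h4 ⟨c, a⟩
          have h4' : ¬ ((j:ℕ) = n - 1 ∧ (i:ℕ) = 0) := fun ⟨a, c⟩ => h3 ⟨c, a⟩
          rw [if_neg h4, if_neg h3', if_neg h4']

/-- Ambarzumian with Floquet boundary conditions: if `S_n(θ)` has the same characteristic
polynomial as the free `F_n(φ)`, then all diagonal entries vanish and `θ = φ` or
`θ = 1 - φ`; in particular `S_n(θ) = F_n(φ)` or `S_n(θ) = F_n(φ)ᵀ`. -/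
theorem ambarzumian_floquet (n : ℕ) (hn : 3 ≤ n) (b : Fin n → ℝ) (θ φ : ℝ)
    (hθ : θ ∈ Set.Ico (0 : ℝ) 1) (hφ : φ ∈ Set.Ico (0 : ℝ) 1)
    (h : (floquetS n b θ).charpoly = (floquetS n (fun _ => 0) φ).charpoly) :
    (∀ i, b i = 0) ∧ (θ = φ ∨ θ = 1 - φ)
      ∧ (floquetS n b θ = floquetS n (fun _ => 0) φ
          ∨ floquetS n b θ = (floquetS n (fun _ => 0) φ)ᵀ) := by
  have hA := amb_isHermitian_floquetS n b θ
  have hF := amb_isHermitian_floquetS n (fun _ => 0) φ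
  have hprod : ∏ i, (X - C ((hA.eigenvalues i : ℂ)))
      = ∏ i, (X - C ((hF.eigenvalues i : ℂ))) := by
    rw [← amb_herm_charpoly hA, ← amb_herm_charpoly hF, h]
  have htr : Matrix.trace (floquetS n b θ * floquetS n b θ)
      = Matrix.trace (floquetS n (fun _ => 0) φ * floquetS n (fun _ => 0) φ) := by
    rw [amb_herm_trace_sq hA, amb_herm_trace_sq hF]
    exact amb_sum_sq_eq_of_prod_eq _ _ hprod
  have hsum0 : ∑ i, ((b i : ℂ))^2 = 0 := by
    rw [← amb_floquetS_trace_sq_diff n hn b θ φ, htr, sub_self]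
  have hsumR : ∑ i, (b i)^2 = (0 : ℝ) := by
    have : ((∑ i, (b i)^2 : ℝ) : ℂ) = 0 := by push_cast; exact hsum0
    exact_mod_cast this
  have hb : ∀ i, b i = 0 := by
    intro i
    have h0 := (Finset.sum_eq_zero_iff_of_nonneg
      (fun i _ => sq_nonneg (b i))).mp hsumR i (Finset.mem_univ i)
    exact pow_eq_zero_iff (two_ne_zero) |>.mp h0
  have hbf : b = fun _ => 0 := funext hb
  rw [hbf] at h
  have hdet : (floquetS n (fun _ => 0) θ).det = (floquetS n (fun _ => 0) φ).det := by
    rw [Matrix.det_eq_sign_charpoly_coeff, Matrix.det_eq_sign_charpoly_coeff, h]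
  obtain ⟨m, rfl⟩ : ∃ m, n = m + 1 := ⟨n - 1, by omega⟩
  have hm : 2 ≤ m := by omega
  have hcos := amb_cos_eq_of_det_eq hm hdet
  have hor := amb_angle hθ hφ hcos
  refine ⟨hb, hor, ?_⟩
  rcases hor with he | he
  · left; rw [hbf, he]
  · right; rw [hbf, he, amb_floquetS_one_sub (m+1) hn φ]
end

section
/- Let F_n be the n×n free discrete Schrödinger matrix with eigenvalues λ_1 < ... < λ_n, and let S_n be the discrete Schrödinger matrix with diagonal b_1, b_2, 0, ..., 0. If λ_k and λ_{k+1} (for some k) are both eigenvalues of S_n, then either b_1 = b_2 = 0, or (λ_k λ_{k+1} ≠ 0 and b_1 = λ_k + λ_{k+1} and b_2 = 1/λ_k + 1/λ_{k+1}). -/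
open Polynomial Matrix

/-- The `m × m` free discrete Schrödinger matrix. -/
def freeSchrodinger (m : ℕ) : Matrix (Fin m) (Fin m) ℝ :=
  Matrix.of fun i j : Fin m =>
    if i = j then 0
    else if (i : ℕ) + 1 = (j : ℕ) ∨ (j : ℕ) + 1 = (i : ℕ) then 1 else 0

/-- tridiagonal matrix over `ℝ[X]` with diagonal `d` and off-diagonal `-1`. -/
noncomputable def triT (m : ℕ) (d : ℕ → Polynomial ℝ) :
    Matrix (Fin m) (Fin m) (Polynomial ℝ) :=
  Matrix.of fun i j => if (i : ℕ) = (j : ℕ) then d i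
    else if (i : ℕ) + 1 = (j : ℕ) ∨ (j : ℕ) + 1 = (i : ℕ) then -1 else 0

lemma triT_det_zero (d : ℕ → Polynomial ℝ) : (triT 0 d).det = 1 := by
  simp [Matrix.det_fin_zero]

lemma triT_det_one (d : ℕ → Polynomial ℝ) : (triT 1 d).det = d 0 := by
  simp [Matrix.det_fin_one, triT]

lemma triT_det_rec (m : ℕ) (d : ℕ → Polynomial ℝ) :
    (triT (m + 2) d).det =
      d 0 * (triT (m + 1) (fun i => d (i + 1))).det
        - (triT m (fun i => d (i + 2))).det := by
  rw [Matrix.det_succ_row_zero, Fin.sum_univ_succ, Fin.sum_univ_succ]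
  have h00 : triT (m + 2) d 0 0 = d 0 := by simp [triT]
  have h01 : triT (m + 2) d 0 ((0 : Fin (m+1)).succ) = -1 := by simp [triT]
  have h0j : ∀ j : Fin m, triT (m + 2) d 0 j.succ.succ = 0 := by
    intro j
    simp only [triT, Matrix.of_apply]
    rw [if_neg, if_neg] <;> simp [Fin.val_succ]
  have hA : (triT (m + 2) d).submatrix Fin.succ ((0 : Fin (m+2)).succAbove)
      = triT (m + 1) (fun i => d (i + 1)) := by
    ext i j
    simp only [Matrix.submatrix_apply, Fin.succAbove_zero, triT, Matrix.of_apply,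
      Fin.val_succ]
    split_ifs <;> first | rfl | omega
  have key2 : ((triT (m + 2) d).submatrix Fin.succ ((0 : Fin (m+1)).succ).succAbove).det
      = - (triT m (fun i => d (i + 2))).det := by
    set N := (triT (m + 2) d).submatrix Fin.succ ((0 : Fin (m+1)).succ).succAbove with hN
    rw [Matrix.det_succ_column_zero, Fin.sum_univ_succ]
    have hN00 : N 0 0 = -1 := by
      simp only [hN, Matrix.submatrix_apply]
      have : (((0 : Fin (m+1)).succ).succAbove 0 : ℕ) = 0 := by
        simp [Fin.succAbove]
      simp only [triT, Matrix.of_apply, Fin.val_succ, this]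
      norm_num
    have hNi0 : ∀ i : Fin m, N i.succ 0 = 0 := by
      intro i
      simp only [hN, Matrix.submatrix_apply]
      have : (((0 : Fin (m+1)).succ).succAbove 0 : ℕ) = 0 := by
        simp [Fin.succAbove]
      simp only [triT, Matrix.of_apply, Fin.val_succ, this]
      rw [if_neg, if_neg] <;> omega
    have hMin : N.submatrix ((0 : Fin (m+1)).succAbove) Fin.succ
        = triT m (fun i => d (i + 2)) := by
      ext i j
      simp only [hN, Matrix.submatrix_apply, Fin.succAbove_zero]
      have hcol : ((((0 : Fin (m+1)).succ).succAbove j.succ) : ℕ) = (j : ℕ) + 2 := by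
        simp [Fin.succAbove, Fin.lt_def]
      simp only [triT, Matrix.of_apply, Fin.val_succ, hcol]
      split_ifs <;> first | rfl | omega
    simp only [hNi0, hN00, hMin]
    simp
  rw [hA, key2]
  simp only [h00, h01, h0j]
  simp
  ring

/-- Characteristic polynomials of the free matrices, shifted: `QQ (m+1) = charpoly F_m`. -/
noncomputable def QQ : ℕ → Polynomial ℝ
  | 0 => 0
  | 1 => 1
  | (m+2) => X * QQ (m+1) - QQ m

lemma free_det : ∀ m : ℕ, (triT m (fun _ => X)).det = QQ (m + 1) := by
  intro m
  induction m using Nat.twoStepInduction with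
  | zero => rw [triT_det_zero]; simp [QQ]
  | one => rw [triT_det_one]; simp [QQ]
  | more m ih1 ih2 =>
    rw [triT_det_rec, ih1, ih2]
    show _ = QQ (m + 3)
    show _ = X * QQ (m+2) - QQ (m+1)
    ring

lemma free_charmatrix (m : ℕ) :
    charmatrix (freeSchrodinger m) = triT m (fun _ => X) := by
  ext i j
  by_cases h : i = j
  · subst h
    rw [charmatrix_apply_eq]
    simp [freeSchrodinger, triT]
  · rw [charmatrix_apply_ne _ _ _ h]
    have h' : (i : ℕ) ≠ (j : ℕ) := fun hh => h (Fin.ext hh)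
    simp only [freeSchrodinger, triT, Matrix.of_apply, if_neg h, if_neg h']
    split_ifs <;> simp

lemma free_charpoly (m : ℕ) : (freeSchrodinger m).charpoly = QQ (m + 1) := by
  rw [Matrix.charpoly, free_charmatrix, free_det]

noncomputable def dS (b₁ b₂ : ℝ) : ℕ → Polynomial ℝ :=
  fun i => if i = 0 then X - C b₁ else if i = 1 then X - C b₂ else X

lemma S_charmatrix (n : ℕ) (b₁ b₂ : ℝ) :
    charmatrix (Matrix.of fun i j : Fin n =>
      if i = j then (if (i : ℕ) = 0 then b₁ else if (i : ℕ) = 1 then b₂ else 0)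
      else if (i : ℕ) + 1 = (j : ℕ) ∨ (j : ℕ) + 1 = (i : ℕ) then 1 else 0)
    = triT n (dS b₁ b₂) := by
  ext i j
  by_cases h : i = j
  · subst h
    rw [charmatrix_apply_eq]
    simp only [triT, dS, Matrix.of_apply, if_pos rfl]
    split_ifs <;> simp
  · rw [charmatrix_apply_ne _ _ _ h]
    have h' : (i : ℕ) ≠ (j : ℕ) := fun hh => h (Fin.ext hh)
    simp only [triT, dS, Matrix.of_apply, if_neg h, if_neg h']
    split_ifs <;> simp

lemma S_det (b₁ b₂ : ℝ) (m : ℕ) :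
    (triT (m + 2) (dS b₁ b₂)).det =
      (X - C b₁) * ((X - C b₂) * QQ (m + 1) - QQ m) - QQ (m + 1) := by
  have h2 : (fun i => dS b₁ b₂ (i + 2)) = fun _ => X := by
    funext i; simp [dS]
  have h1 : (triT (m + 1) (fun i => dS b₁ b₂ (i + 1))).det
      = (X - C b₂) * QQ (m + 1) - QQ m := by
    cases m with
    | zero => rw [triT_det_one]; simp [dS, QQ]
    | succ m' =>
      rw [triT_det_rec]
      have ha : (fun i => dS b₁ b₂ (i + 1 + 1)) = fun _ => X := by
        funext i; simp [dS]
      have hb : (fun i => dS b₁ b₂ (i + 2 + 1)) = fun _ => X := by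
        funext i; simp [dS]
      rw [ha, hb, free_det, free_det]
      simp [dS]
  rw [triT_det_rec, h1, h2, free_det]
  simp [dS]

lemma QQ_no_common (x : ℝ) (m : ℕ) (h1 : (QQ m).eval x = 0)
    (h2 : (QQ (m + 1)).eval x = 0) : False := by
  induction m with
  | zero => simp [QQ] at h2
  | succ m ih =>
    apply ih _ h1
    have : QQ (m + 2) = X * QQ (m + 1) - QQ m := rfl
    rw [this] at h2
    simp only [eval_sub, eval_mul, eval_X, h1, mul_zero] at h2
    linarith [h2]

lemma eval_charpoly_of_mem_spectrum {n : ℕ} {M : Matrix (Fin n) (Fin n) ℝ} {μ : ℝ}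
    (h : μ ∈ spectrum ℝ M) : M.charpoly.eval μ = 0 := by
  have h' := spectrum.mem_iff.mp h
  by_contra hne
  apply h'
  rw [Matrix.isUnit_iff_isUnit_det, isUnit_iff_ne_zero]
  have hmap : (charmatrix M).map (evalRingHom μ) = algebraMap ℝ _ μ - M := by
    ext i j
    by_cases hij : i = j
    · subst hij
      simp [charmatrix_apply_eq, Matrix.algebraMap_matrix_apply]
    · simp [charmatrix_apply_ne _ _ _ hij, Matrix.algebraMap_matrix_apply, hij,
        Matrix.sub_apply, Matrix.one_apply]
  have : M.charpoly.eval μ = ((charmatrix M).map (evalRingHom μ)).det := by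
    rw [Matrix.charpoly, ← Polynomial.coe_evalRingHom, RingHom.map_det,
      RingHom.mapMatrix_apply]
  rw [hmap] at this
  rw [← this]
  exact hne

/-- the key quadratic relation at a common eigenvalue. -/
lemma key_quadratic (b₁ b₂ x : ℝ) (m : ℕ)
    (hroot : (QQ (m + 3)).eval x = 0)
    (hs : (((X : Polynomial ℝ) - C b₁) * ((X - C b₂) * QQ (m + 1) - QQ m)
            - QQ (m + 1)).eval x = 0) :
    b₂ * x ^ 2 - b₁ * b₂ * x + b₁ = 0 := by
  set w := (QQ (m + 2)).eval x with hw
  have hw0 : w ≠ 0 := fun h0 => QQ_no_common x (m + 2) h0 hroot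
  have e3 : QQ (m + 3) = X * QQ (m + 2) - QQ (m + 1) := rfl
  have e2 : QQ (m + 2) = X * QQ (m + 1) - QQ m := rfl
  rw [e3] at hroot
  simp only [eval_sub, eval_mul, eval_X] at hroot
  have e1 : (QQ (m + 1)).eval x = x * w := by
    rw [hw]; linarith [hroot]
  have e0 : (QQ m).eval x = x * (x * w) - w := by
    have : (QQ (m + 2)).eval x = x * (QQ (m + 1)).eval x - (QQ m).eval x := by
      rw [e2]; simp
    rw [e1, ← hw] at this
    linarith
  simp only [eval_sub, eval_mul, eval_X, eval_C, e1, e0] at hs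
  have hfac : w * (b₂ * x ^ 2 - b₁ * b₂ * x + b₁) = 0 := by linear_combination -hs
  rcases mul_eq_zero.mp hfac with h | h
  · exact absurd h hw0
  · exact h

lemma final_algebra (b₁ b₂ l m : ℝ) (hne : l ≠ m)
    (hl : b₂ * l ^ 2 - b₁ * b₂ * l + b₁ = 0)
    (hm : b₂ * m ^ 2 - b₁ * b₂ * m + b₁ = 0) :
    (b₁ = 0 ∧ b₂ = 0) ∨ (l * m ≠ 0 ∧ b₁ = l + m ∧ b₂ = 1 / l + 1 / m) := by
  by_cases hb2 : b₂ = 0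
  · left
    refine ⟨?_, hb2⟩
    subst hb2
    linarith [hl]
  · right
    have hlm' : l - m ≠ 0 := sub_ne_zero.mpr hne
    have hsum : b₁ = l + m := by
      have hd : (l - m) * (b₂ * (l + m - b₁)) = 0 := by linear_combination hl - hm
      rcases mul_eq_zero.mp hd with h | h
      · exact absurd h hlm'
      · rcases mul_eq_zero.mp h with h' | h'
        · exact absurd h' hb2
        · linarith
    subst hsum
    have hprod : l + m = b₂ * (l * m) := by linear_combination hl
    have hlm0 : l * m ≠ 0 := by
      intro h0
      have hs0 : l + m = 0 := by rw [hprod, h0, mul_zero]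
      rcases mul_eq_zero.mp h0 with h | h
      · exact hne (by linarith)
      · exact hne (by linarith)
    have hl0 : l ≠ 0 := fun h => hlm0 (by rw [h, zero_mul])
    have hm0 : m ≠ 0 := fun h => hlm0 (by rw [h, mul_zero])
    refine ⟨hlm0, rfl, ?_⟩
    field_simp
    linear_combination -hprod

/-- If two consecutive eigenvalues `λ_k < λ_{k+1}` of the free matrix `F_n` are both
eigenvalues of the perturbed matrix `S_n` (diagonal `b₁, b₂, 0, …, 0`), then either
`b₁ = b₂ = 0`, or `b₁ = λ_k + λ_{k+1}` and `b₂ = 1/λ_k + 1/λ_{k+1}`. -/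
theorem two_eigenvalues_dichotomy (n : ℕ) (b₁ b₂ : ℝ)
    (S : Matrix (Fin n) (Fin n) ℝ)
    (hS : S = Matrix.of fun i j : Fin n =>
      if i = j then (if (i : ℕ) = 0 then b₁ else if (i : ℕ) = 1 then b₂ else 0)
      else if (i : ℕ) + 1 = (j : ℕ) ∨ (j : ℕ) + 1 = (i : ℕ) then 1 else 0)
    (lam : Fin n → ℝ) (hmono : StrictMono lam)
    (hchar : (freeSchrodinger n).charpoly = ∏ i, (X - C (lam i)))
    (k : ℕ) (hk : k + 1 < n)
    (h1 : lam ⟨k, by omega⟩ ∈ spectrum ℝ S)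
    (h2 : lam ⟨k + 1, hk⟩ ∈ spectrum ℝ S) :
    (b₁ = 0 ∧ b₂ = 0) ∨
      (lam ⟨k, by omega⟩ * lam ⟨k + 1, hk⟩ ≠ 0
        ∧ b₁ = lam ⟨k, by omega⟩ + lam ⟨k + 1, hk⟩
        ∧ b₂ = 1 / lam ⟨k, by omega⟩ + 1 / lam ⟨k + 1, hk⟩) := by
  obtain ⟨m, rfl⟩ : ∃ m, n = m + 2 := ⟨n - 2, by omega⟩
  set l : ℝ := lam ⟨k, by omega⟩ with hldef
  set μ : ℝ := lam ⟨k + 1, hk⟩ with hμdef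
  have hne : l ≠ μ := by
    apply ne_of_lt
    apply hmono
    simp [Fin.lt_def]
  -- roots of QQ (m+3)
  have hQprod : QQ (m + 3) = ∏ i, (X - C (lam i)) := by
    rw [← free_charpoly]; exact hchar
  have hrootl : (QQ (m + 3)).eval l = 0 := by
    rw [hQprod, eval_prod]
    apply Finset.prod_eq_zero (Finset.mem_univ (⟨k, by omega⟩ : Fin (m + 2)))
    simp [hldef]
  have hrootμ : (QQ (m + 3)).eval μ = 0 := by
    rw [hQprod, eval_prod]
    apply Finset.prod_eq_zero (Finset.mem_univ (⟨k + 1, hk⟩ : Fin (m + 2)))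
    simp [hμdef]
  -- charpoly of S
  have hSchar : S.charpoly =
      (X - C b₁) * ((X - C b₂) * QQ (m + 1) - QQ m) - QQ (m + 1) := by
    rw [Matrix.charpoly, hS, S_charmatrix, S_det]
  have hsl : (((X : Polynomial ℝ) - C b₁) * ((X - C b₂) * QQ (m + 1) - QQ m)
      - QQ (m + 1)).eval l = 0 := by
    rw [← hSchar]; exact eval_charpoly_of_mem_spectrum h1
  have hsμ : (((X : Polynomial ℝ) - C b₁) * ((X - C b₂) * QQ (m + 1) - QQ m)
      - QQ (m + 1)).eval μ = 0 := by
    rw [← hSchar]; exact eval_charpoly_of_mem_spectrum h2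
  exact final_algebra b₁ b₂ l μ hne
    (key_quadratic b₁ b₂ l m hrootl hsl)
    (key_quadratic b₁ b₂ μ m hrootμ hsμ)
end
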